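/- For k ≥ 2, the number of quintuple persymmetric 10×k matrices over F₂ of rank 1 equals 93. -/

import Mathlib

/-- The `2n × k` matrix over `F₂` built from `n` vectors `α⁽ʲ⁾ ∈ F₂^{k+1}`:
rows `2j` and `2j+1` (0-indexed) are the two consecutive length-`k` windows of `α⁽ʲ⁾`. -/
def persMat (n k : ℕ) (α : Fin n → Fin (k+1) → ZMod 2) :
    Matrix (Fin (2*n)) (Fin k) (ZMod 2) :=
  fun i j => α ⟨i.val / 2, by have := i.isLt; omega⟩
               ⟨j.val + i.val % 2, by have := j.isLt; omega⟩

/-- `Gamma n k i` = number of `n`-times persymmetric `2n × k` matrices over `F₂` of rank `i`. -/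
noncomputable def Gamma (n k i : ℕ) : ℕ :=
  Nat.card {α : Fin n → Fin (k+1) → ZMod 2 // (persMat n k α).rank = i}

/-!
Over `F₂` a matrix has rank one iff its rows take exactly one nonzero value `v`. The rows of
`persMat n k α` are the windows `Fin.init α⁽ʲ⁾`, `Fin.tail α⁽ʲ⁾`, and a nonzero `a ∈ F₂^{k+1}`
whose two windows lie in `{0, v}` is one of `1`, `e₀`, `e_k`, with `v = 1`, `e₀`, `e_{k-1}`
respectively. For `k ≥ 2` these three values of `v` differ, so the rank-one families are the
nonzero `α` with all `α⁽ʲ⁾ ∈ {0, a}` for a single one of the three vectors `a`: there are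
`3 · (2⁵ - 1) = 93` of them.
-/

open Finset Module Submodule

theorem ZMod.eq_zero_or_eq_one_of_two (x : ZMod 2) : x = 0 ∨ x = 1 := by
  revert x; decide

theorem ZMod.finrank_span_eq_one_iff {V : Type*} [AddCommGroup V] [Module (ZMod 2) V]
    (S : Set V) : finrank (ZMod 2) (span (ZMod 2) S) = 1 ↔ ∃ v ≠ 0, v ∈ S ∧ S ⊆ {0, v} := by
  constructor
  · intro h
    obtain ⟨⟨v, hv_span⟩, hv, hgen⟩ := finrank_eq_one_iff'.mp h
    have hv : v ≠ 0 := fun h => hv (Subtype.ext h)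
    have hsub : S ⊆ {0, v} := by
      intro s hs
      obtain ⟨c, hc⟩ := hgen ⟨s, subset_span hs⟩
      rcases ZMod.eq_zero_or_eq_one_of_two c with rfl | rfl
      · exact .inl (by simpa using (congrArg Subtype.val hc).symm)
      · exact .inr (by simpa using (congrArg Subtype.val hc).symm)
    refine ⟨v, hv, ?_, hsub⟩
    by_contra hvS
    have hS : S ⊆ {0} := fun s hs => (hsub hs).resolve_right fun h => hvS (h ▸ hs)
    simpa [hv] using span_mono hS hv_span
  · rintro ⟨v, hv, hvS, hSv⟩
    have : span (ZMod 2) S = (ZMod 2) ∙ v :=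
      le_antisymm (span_le.mpr fun s hs => by
          rcases hSv hs with rfl | rfl
          exacts [zero_mem _, mem_span_singleton_self s])
        (span_singleton_le_iff_mem _ _ |>.mpr (subset_span hvS))
    rw [this, finrank_span_singleton hv]

theorem card_nonzero_pi_mem_pair {ι V : Type*} [Fintype ι] [DecidableEq ι] [Zero V]
    [DecidableEq V] (A : Finset V) (hA : 0 ∉ A) :
    Nat.card {α : ι → V // α ≠ 0 ∧ ∃ a ∈ A, ∀ i, α i ∈ ({0, a} : Finset V)} =
      #A * (2 ^ Fintype.card ι - 1) := by
  set F : V → Finset (ι → V) := fun a => (Fintype.piFinset fun _ => {0, a}).erase 0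
  have hmem : ∀ α, α ∈ A.biUnion F ↔ α ≠ 0 ∧ ∃ a ∈ A, ∀ i, α i ∈ ({0, a} : Finset V) := by
    simp only [F, mem_biUnion, mem_erase, Fintype.mem_piFinset]
    grind
  have hdisj : (A : Set V).PairwiseDisjoint F := by
    intro a _ b _ hab
    refine Finset.disjoint_left.mpr fun α hαa hαb => ?_
    simp only [F, mem_erase, Fintype.mem_piFinset, mem_insert, mem_singleton] at hαa hαb
    obtain ⟨i, hi⟩ := Function.ne_iff.mp hαa.1
    exact hab (((hαa.2 i).resolve_left hi).symm.trans ((hαb.2 i).resolve_left hi))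
  have hcard : ∀ a ∈ A, #(F a) = 2 ^ Fintype.card ι - 1 := by
    intro a ha
    have ha : (0 : V) ≠ a := fun h => hA (h ▸ ha)
    rw [card_erase_of_mem (by simp [Fintype.mem_piFinset]), Fintype.card_piFinset]
    simp [card_pair ha]
  rw [Nat.card_congr (Equiv.subtypeEquivRight fun α => (hmem α).symm), Nat.card_eq_finsetCard,
    card_biUnion hdisj, sum_congr rfl hcard, sum_const, smul_eq_mul]

namespace Fin

variable {k : ℕ} {M : Type*}

theorem eq_const_of_init_eq_tail {a : Fin (k + 1) → M} (h : init a = tail a) :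
    a = Function.const _ (a 0) := by
  funext i
  induction i using Fin.induction with
  | zero => rfl
  | succ i ih => exact (congrFun h i).symm.trans ih

variable [Zero M]

theorem eq_zero_of_init_eq_zero_of_tail_eq_zero {a : Fin (k + 2) → M} (h0 : init a = 0)
    (h1 : tail a = 0) : a = 0 := by
  funext i
  induction i using Fin.cases with
  | zero => exact congrFun h0 0
  | succ i => exact congrFun h1 i

theorem eq_single_last_of_init_eq_zero {a : Fin (k + 1) → M} (h : init a = 0) :
    a = Pi.single (last k) (a (last k)) := by
  funext i
  induction i using Fin.lastCases with
  | last => simp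
  | cast i => simpa [init, castSucc_ne_last] using congrFun h i

theorem eq_single_zero_of_tail_eq_zero {a : Fin (k + 1) → M} (h : tail a = 0) :
    a = Pi.single 0 (a 0) := by
  funext i
  induction i using Fin.cases with
  | zero => simp
  | succ i => simpa [tail, succ_ne_zero] using congrFun h i

@[simp] theorem init_single_zero (x : M) :
    init (Pi.single 0 x : Fin (k + 2) → M) = Pi.single 0 x := by
  funext i; simp [init, Pi.single_apply]

@[simp] theorem tail_single_zero (x : M) : tail (Pi.single 0 x : Fin (k + 1) → M) = 0 := by
  funext i; simp [tail, succ_ne_zero]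

@[simp] theorem init_single_last (x : M) : init (Pi.single (last k) x : Fin (k + 1) → M) = 0 := by
  funext i; simp [init, castSucc_ne_last]

@[simp] theorem tail_single_last (x : M) :
    tail (Pi.single (last (k + 1)) x : Fin (k + 2) → M) = Pi.single (last k) x := by
  funext i; simp [tail, Pi.single_apply]

end Fin

theorem pairwise_ne_one_single_zero_single_last (k : ℕ) :
    (1 : Fin (k + 2) → ZMod 2) ≠ Pi.single 0 1 ∧
      (1 : Fin (k + 2) → ZMod 2) ≠ Pi.single (Fin.last _) 1 ∧
      (Pi.single 0 1 : Fin (k + 2) → ZMod 2) ≠ Pi.single (Fin.last _) 1 := by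
  refine ⟨fun h => ?_, fun h => ?_, fun h => ?_⟩
  · simpa using congrFun h 1
  · simpa [Pi.single_apply] using congrFun h 0
  · simpa [Pi.single_apply] using congrFun h 0

def WindowsIn {k : ℕ} (v : Fin k → ZMod 2) (a : Fin (k + 1) → ZMod 2) : Prop :=
  (Fin.init a = 0 ∨ Fin.init a = v) ∧ (Fin.tail a = 0 ∨ Fin.tail a = v)

open Fin in
theorem WindowsIn.cases {k : ℕ} {v : Fin (k + 1) → ZMod 2} {a : Fin (k + 2) → ZMod 2}
    (h : WindowsIn v a) (ha : a ≠ 0) :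
    (a = 1 ∧ v = 1) ∨ (a = Pi.single 0 1 ∧ v = Pi.single 0 1) ∨
      (a = Pi.single (last _) 1 ∧ v = Pi.single (last _) 1) := by
  obtain ⟨h0 | h0, h1 | h1⟩ := h
  · exact absurd (eq_zero_of_init_eq_zero_of_tail_eq_zero h0 h1) ha
  · have ha' := eq_single_last_of_init_eq_zero h0
    have hlast : a (last _) = 1 :=
      (ZMod.eq_zero_or_eq_one_of_two _).resolve_left fun h => ha (by simpa [h] using ha')
    rw [hlast] at ha'
    subst ha'
    simp [← h1]
  · have ha' := eq_single_zero_of_tail_eq_zero h1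
    have h0' : a 0 = 1 :=
      (ZMod.eq_zero_or_eq_one_of_two _).resolve_left fun h => ha (by simpa [h] using ha')
    rw [h0'] at ha'
    subst ha'
    simp [← h0]
  · have ha' := eq_const_of_init_eq_tail (h0.trans h1.symm)
    have h0' : a 0 = 1 :=
      (ZMod.eq_zero_or_eq_one_of_two _).resolve_left fun h => ha (by rw [ha', h]; rfl)
    rw [h0'] at ha'
    subst ha'
    exact .inl ⟨rfl, h0.symm⟩

theorem WindowsIn.eq {k : ℕ} {v : Fin (k + 2) → ZMod 2} {a b : Fin (k + 3) → ZMod 2}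
    (hav : WindowsIn v a) (hbv : WindowsIn v b) (ha : a ≠ 0) (hb : b ≠ 0) : a = b := by
  obtain ⟨h1, h2, h3⟩ := pairwise_ne_one_single_zero_single_last k
  rcases hav.cases ha with ⟨rfl, rfl⟩ | ⟨rfl, rfl⟩ | ⟨rfl, rfl⟩ <;>
    rcases hbv.cases hb with ⟨rfl, h⟩ | ⟨rfl, h⟩ | ⟨rfl, h⟩ <;>
    simp_all [eq_comm]

theorem range_persMat (n k : ℕ) (α : Fin n → Fin (k + 1) → ZMod 2) :
    Set.range (persMat n k α) = ⋃ j, {Fin.init (α j), Fin.tail (α j)} := by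
  ext x
  simp only [Set.mem_iUnion, Set.mem_insert_iff, Set.mem_singleton_iff]
  constructor
  · rintro ⟨i, rfl⟩
    refine ⟨⟨i / 2, by omega⟩, ?_⟩
    rcases Nat.mod_two_eq_zero_or_one i with h | h
    · left; funext c; simp only [persMat, h]; rfl
    · right; funext c; simp only [persMat, h]; rfl
  · rintro ⟨j, rfl | rfl⟩
    · refine ⟨⟨2 * j, by omega⟩, funext fun c => ?_⟩
      simp only [persMat, Nat.mul_mod_right, Nat.mul_div_cancel_left _ two_pos]; rfl
    · refine ⟨⟨2 * j + 1, by omega⟩, funext fun c => ?_⟩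
      simp only [persMat, Nat.mul_add_mod, Nat.mul_add_div two_pos]; rfl

open Fin in
theorem rank_persMat_eq_one_iff {n k : ℕ} (α : Fin n → Fin (k + 3) → ZMod 2) :
    (persMat n (k + 2) α).rank = 1 ↔
      α ≠ 0 ∧ ∃ a ∈ ({1, Pi.single 0 1, Pi.single (last _) 1} : Finset _),
        ∀ j, α j ∈ ({0, a} : Finset _) := by
  rw [Matrix.rank_eq_finrank_span_row, Matrix.row, ZMod.finrank_span_eq_one_iff, range_persMat]
  simp only [Set.mem_iUnion, Set.iUnion_subset_iff, Set.insert_subset_iff,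
    Set.singleton_subset_iff, Set.mem_insert_iff, Set.mem_singleton_iff, Finset.mem_insert,
    Finset.mem_singleton]
  constructor
  · rintro ⟨v, hv, ⟨j₀, hj₀⟩, hsub⟩
    have hα₀ : α j₀ ≠ 0 := by
      rintro h
      rw [h] at hj₀
      exact hv (hj₀.elim id id)
    refine ⟨Function.ne_iff.mpr ⟨j₀, hα₀⟩, α j₀, ?_, fun j => ?_⟩
    · rcases WindowsIn.cases (hsub j₀) hα₀ with ⟨h, -⟩ | ⟨h, -⟩ | ⟨h, -⟩ <;> simp [h]
    · by_cases h : α j = 0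
      · exact .inl h
      · exact .inr (WindowsIn.eq (hsub j) (hsub j₀) h hα₀)
  · rintro ⟨hα, a, ha, hαa⟩
    obtain ⟨j₀, hj₀⟩ := Function.ne_iff.mp hα
    have ha₀ : α j₀ = a := (hαa j₀).resolve_left hj₀
    obtain ⟨v, hv, hva, hav⟩ : ∃ v ≠ 0, (v = init a ∨ v = tail a) ∧ WindowsIn v a := by
      rcases ha with rfl | rfl | rfl
      · exact ⟨1, one_ne_zero, .inl rfl, .inr rfl, .inr rfl⟩
      · exact ⟨Pi.single 0 1, by simp, by simp [WindowsIn]⟩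
      · exact ⟨Pi.single (last _) 1, by simp, by simp [WindowsIn]⟩
    refine ⟨v, hv, ⟨j₀, ha₀ ▸ hva⟩, fun j => ?_⟩
    rcases hαa j with h | h
    · rw [h]; exact ⟨.inl rfl, .inl rfl⟩
    · exact h ▸ hav

theorem gamma5_rank_one (k : ℕ) (hk : 2 ≤ k) : Gamma 5 k 1 = 93 := by
  obtain ⟨k, rfl⟩ := Nat.exists_eq_add_of_le' hk
  obtain ⟨h1, h2, h3⟩ := pairwise_ne_one_single_zero_single_last (k + 1)
  rw [Gamma, Nat.card_congr (Equiv.subtypeEquivRight rank_persMat_eq_one_iff),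
    card_nonzero_pi_mem_pair _ (by simp [eq_comm]), card_eq_three.mpr ⟨_, _, _, h1, h2, h3, rfl⟩]
  rfl
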